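/- Let λ ≠ 0 and adopt the Jost/matrix-solution setup of the context. Then there exist unique 2×2 complex matrices A(λ), B(λ) such that F₁(x) = G₁(x)A(λ) + G₂(x)B(λ) for all x ∈ ℝ. Moreover: G₂(x) = F₂(x)A(λ) + F₁(x)B(λ) for all x; 𝒲[F₁, G₂] = A(λ)ᵀ(2iλp − 2μq); and 𝒲[F₁, G₁] = −B(λ)ᵀ(2iλp − 2μq). -/

import Mathlib

noncomputable section

open Real MeasureTheory Matrix

/-- The matrix Schrödinger operator `ℋ` acting on `f = (f₁, f₂) : ℝ → ℂ²`:
`ℋf = (−f₁'' + f₁ + V₁f₁ + V₂f₂, f₂'' − f₂ − V₂f₁ − V₁f₂)`. -/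
def matH (V₁ V₂ : ℝ → ℝ) (f : ℝ → ℂ × ℂ) (x : ℝ) : ℂ × ℂ :=
  (-(iteratedDeriv 2 (fun y => (f y).1) x) + (f x).1
      + (V₁ x : ℂ) * (f x).1 + (V₂ x : ℂ) * (f x).2,
    iteratedDeriv 2 (fun y => (f y).2) x - (f x).2
      - (V₂ x : ℂ) * (f x).1 - (V₁ x : ℂ) * (f x).2)

/-- `f` is a (classical, twice continuously differentiable) solution of `ℋf = z f`. -/
def IsSolution (V₁ V₂ : ℝ → ℝ) (z : ℂ) (f : ℝ → ℂ × ℂ) : Prop :=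
  ContDiff ℝ 2 f ∧ ∀ x : ℝ, matH V₁ V₂ f x = z • f x

/-- The potentials `V₁, V₂` are smooth, even, and exponentially decaying with rate `γ ∈ (0,1)`,
together with all derivatives. -/
def PotentialHyp (γ : ℝ) (V₁ V₂ : ℝ → ℝ) : Prop :=
  0 < γ ∧ γ < 1 ∧ ContDiff ℝ (⊤ : ℕ∞) V₁ ∧ ContDiff ℝ (⊤ : ℕ∞) V₂ ∧
    (∀ x, V₁ (-x) = V₁ x) ∧ (∀ x, V₂ (-x) = V₂ x) ∧
    ∀ k : ℕ, ∃ C : ℝ, ∀ x : ℝ,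
      |iteratedDeriv k V₁ x| + |iteratedDeriv k V₂ x| ≤ C * Real.exp (-γ * |x|)

/-- `μ(λ) = √(λ² + 2)`. -/
def mu (lam : ℝ) : ℝ := Real.sqrt (lam ^ 2 + 2)

/-- Componentwise complex conjugation of a `ℂ²`-valued function. -/
def conj2 (f : ℝ → ℂ × ℂ) : ℝ → ℂ × ℂ :=
  fun x => (starRingEnd ℂ (f x).1, starRingEnd ℂ (f x).2)

/-- The (bilinear, unconjugated) Wronskian
`W[f,g](x) = f₁'g₁ + f₂'g₂ − f₁g₁' − f₂g₂'`. -/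
def Wr (f g : ℝ → ℂ × ℂ) (x : ℝ) : ℂ :=
  deriv (fun y => (f y).1) x * (g x).1 + deriv (fun y => (f y).2) x * (g x).2
    - (f x).1 * deriv (fun y => (g y).1) x - (f x).2 * deriv (fun y => (g y).2) x

/-- The Jost-type asymptotics of `f₁(·,λ), f₃(·,λ), f̃₄(·,λ)` for a fixed `λ`. -/
def JostAsymp (γ lam : ℝ) (f₁ f₃ f₄t : ℝ → ℂ × ℂ) : Prop :=
  ∃ x0 C : ℝ, 0 ≤ x0 ∧ 0 < C ∧ ∀ j : ℕ, j ≤ 1 → ∀ x : ℝ, x0 ≤ x →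
    ‖iteratedDeriv j
        (fun y : ℝ => Complex.exp (-Complex.I * (lam : ℂ) * (y : ℂ)) • f₁ y
          - ((1 : ℂ), (0 : ℂ))) x‖
      ≤ C * mu lam ^ ((j : ℝ) - 1) * Real.exp (-γ * x) ∧
    ‖iteratedDeriv j
        (fun y : ℝ => Real.exp (mu lam * y) • f₃ y - ((0 : ℂ), (1 : ℂ))) x‖
      ≤ C * mu lam ^ ((j : ℝ) - 1) * Real.exp (-γ * x) ∧
    ‖iteratedDeriv j
        (fun y : ℝ => Real.exp (-(mu lam) * y) • f₄t y - ((0 : ℂ), (1 : ℂ))) x‖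
      ≤ C * mu lam ^ ((j : ℝ) - 1) * Real.exp (-γ * x)

/-- Entrywise derivative of a matrix-valued function. -/
def mderiv (F : ℝ → Matrix (Fin 2) (Fin 2) ℂ) (x : ℝ) : Matrix (Fin 2) (Fin 2) ℂ :=
  Matrix.of fun i j => deriv (fun y => F y i j) x

/-- The matrix Wronskian `𝒲[F,G](x) = F'(x)ᵀ G(x) − F(x)ᵀ G'(x)`. -/
def mWr (F G : ℝ → Matrix (Fin 2) (Fin 2) ℂ) (x : ℝ) : Matrix (Fin 2) (Fin 2) ℂ :=
  (mderiv F x)ᵀ * G x - (F x)ᵀ * mderiv G x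

/-- The 2×2 matrix-valued function with columns `u` and `v`. -/
def matOf (u v : ℝ → ℂ × ℂ) (x : ℝ) : Matrix (Fin 2) (Fin 2) ℂ :=
  !![(u x).1, (v x).1; (u x).2, (v x).2]

/-- `p = diag(1,0)`. -/
def pmat : Matrix (Fin 2) (Fin 2) ℂ := !![1, 0; 0, 0]

/-- `q = diag(0,1)`. -/
def qmat : Matrix (Fin 2) (Fin 2) ℂ := !![0, 0; 0, 1]

/-- `f₄ := f̃₄ − c₁ f₁ − c₂ f₂` where `f₂ = conj2 f₁`. -/
def f4def (f₁ f₄t : ℝ → ℂ × ℂ) (c₁ c₂ : ℂ) : ℝ → ℂ × ℂ :=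
  fun y => f₄t y - c₁ • f₁ y - c₂ • conj2 f₁ y


noncomputable section
open Real MeasureTheory Matrix Filter Topology

namespace Pf

variable {V₁ V₂ : ℝ → ℝ} {z : ℂ} {f g : ℝ → ℂ × ℂ}

/-- first component is C² -/
lemma cd1 (hf : ContDiff ℝ 2 f) : ContDiff ℝ 2 fun y => (f y).1 := hf.fst
lemma cd2 (hf : ContDiff ℝ 2 f) : ContDiff ℝ 2 fun y => (f y).2 := hf.snd

lemma diff_of_cd2 {h : ℝ → ℂ} (hh : ContDiff ℝ 2 h) : Differentiable ℝ h :=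
  hh.differentiable (by norm_num)

lemma diff_deriv_of_cd2 {h : ℝ → ℂ} (hh : ContDiff ℝ 2 h) : Differentiable ℝ (deriv h) := by
  have h2 : ContDiff ℝ ((1 : ℕ∞) + 1) h := by exact_mod_cast hh
  rw [contDiff_succ_iff_deriv] at h2
  exact h2.2.2.differentiable (by norm_num)

lemma it2_eq {h : ℝ → ℂ} : iteratedDeriv 2 h = deriv (deriv h) := by
  simp [iteratedDeriv_succ, iteratedDeriv_one]

/-- solution second-derivative formulas -/
lemma sol_dd1 (hf : IsSolution V₁ V₂ z f) (x : ℝ) :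
    deriv (deriv fun y => (f y).1) x
      = (1 - z + (V₁ x : ℂ)) * (f x).1 + (V₂ x : ℂ) * (f x).2 := by
  have := congrArg Prod.fst (hf.2 x)
  simp only [matH, Prod.smul_fst, smul_eq_mul] at this
  rw [← it2_eq]
  linear_combination -this

lemma sol_dd2 (hf : IsSolution V₁ V₂ z f) (x : ℝ) :
    deriv (deriv fun y => (f y).2) x
      = (1 + z + (V₁ x : ℂ)) * (f x).2 + (V₂ x : ℂ) * (f x).1 := by
  have := congrArg Prod.snd (hf.2 x)
  simp only [matH, Prod.smul_snd, smul_eq_mul] at this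
  rw [← it2_eq]
  linear_combination this

/-- The Wronskian of two solutions is constant. -/
lemma wr_const (hf : IsSolution V₁ V₂ z f) (hg : IsSolution V₁ V₂ z g) (x y : ℝ) :
    Wr f g x = Wr f g y := by
  have hW : ∀ t : ℝ, HasDerivAt (Wr f g) 0 t := by
    intro t
    have Hf1 : HasDerivAt (fun y => (f y).1) (deriv (fun y => (f y).1) t) t :=
      (diff_of_cd2 (cd1 hf.1) t).hasDerivAt
    have Hf2 : HasDerivAt (fun y => (f y).2) (deriv (fun y => (f y).2) t) t :=
      (diff_of_cd2 (cd2 hf.1) t).hasDerivAt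
    have Hg1 : HasDerivAt (fun y => (g y).1) (deriv (fun y => (g y).1) t) t :=
      (diff_of_cd2 (cd1 hg.1) t).hasDerivAt
    have Hg2 : HasDerivAt (fun y => (g y).2) (deriv (fun y => (g y).2) t) t :=
      (diff_of_cd2 (cd2 hg.1) t).hasDerivAt
    have Hf1' : HasDerivAt (deriv fun y => (f y).1) (deriv (deriv fun y => (f y).1) t) t :=
      (diff_deriv_of_cd2 (cd1 hf.1) t).hasDerivAt
    have Hf2' : HasDerivAt (deriv fun y => (f y).2) (deriv (deriv fun y => (f y).2) t) t :=
      (diff_deriv_of_cd2 (cd2 hf.1) t).hasDerivAt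
    have Hg1' : HasDerivAt (deriv fun y => (g y).1) (deriv (deriv fun y => (g y).1) t) t :=
      (diff_deriv_of_cd2 (cd1 hg.1) t).hasDerivAt
    have Hg2' : HasDerivAt (deriv fun y => (g y).2) (deriv (deriv fun y => (g y).2) t) t :=
      (diff_deriv_of_cd2 (cd2 hg.1) t).hasDerivAt
    have H : HasDerivAt (Wr f g)
        ((deriv (deriv fun y => (f y).1) t * (g t).1
            + deriv (fun y => (f y).1) t * deriv (fun y => (g y).1) t
          + (deriv (deriv fun y => (f y).2) t * (g t).2
            + deriv (fun y => (f y).2) t * deriv (fun y => (g y).2) t))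
          - (deriv (fun y => (f y).1) t * deriv (fun y => (g y).1) t
            + (f t).1 * deriv (deriv fun y => (g y).1) t)
          - (deriv (fun y => (f y).2) t * deriv (fun y => (g y).2) t
            + (f t).2 * deriv (deriv fun y => (g y).2) t)) t :=
      ((((Hf1'.mul Hg1).add (Hf2'.mul Hg2)).sub (Hf1.mul Hg1')).sub (Hf2.mul Hg2'))
    convert H using 1
    rw [sol_dd1 hf, sol_dd2 hf, sol_dd1 hg, sol_dd2 hg]
    ring
  have hd : Differentiable ℝ (Wr f g) := fun t => (hW t).differentiableAt
  exact is_const_of_deriv_eq_zero hd (fun t => (hW t).deriv) x y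

/-- Wr is antisymmetric. -/
lemma wr_antisymm (f g : ℝ → ℂ × ℂ) (x : ℝ) : Wr f g x = - Wr g f x := by
  simp only [Wr]; ring

lemma wr_self (f : ℝ → ℂ × ℂ) (x : ℝ) : Wr f f x = 0 := by
  simp only [Wr]; ring

/-- reflection formula -/
lemma wr_reflect (f g : ℝ → ℂ × ℂ) (x : ℝ) :
    Wr (fun y => f (-y)) (fun y => g (-y)) x = - Wr f g (-x) := by
  simp only [Wr]
  rw [deriv_comp_neg (f := fun t => (f t).1), deriv_comp_neg (f := fun t => (f t).2),
    deriv_comp_neg (f := fun t => (g t).1), deriv_comp_neg (f := fun t => (g t).2)]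
  ring

end Pf


noncomputable section
open Real MeasureTheory Matrix Filter Topology
open scoped ComplexConjugate

namespace Pf

variable {V₁ V₂ : ℝ → ℝ} {z : ℂ} {f g : ℝ → ℂ × ℂ}

lemma deriv2_sub_smul {h k : ℝ → ℂ} (hh : ContDiff ℝ 2 h) (hk : ContDiff ℝ 2 k)
    (c : ℂ) (x : ℝ) :
    deriv (deriv (fun y => h y - c * k y)) x = deriv (deriv h) x - c * deriv (deriv k) x := by
  have e : deriv (fun y => h y - c * k y) = fun t => deriv h t - c * deriv k t := by
    funext t
    rw [deriv_fun_sub (diff_of_cd2 hh t) ((diff_of_cd2 hk t).const_mul c),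
      deriv_const_mul c (diff_of_cd2 hk t)]
  rw [e, deriv_fun_sub (diff_deriv_of_cd2 hh x) ((diff_deriv_of_cd2 hk x).const_mul c),
    deriv_const_mul c (diff_deriv_of_cd2 hk x)]

lemma sol_sub_smul (hf : IsSolution V₁ V₂ z f) (hg : IsSolution V₁ V₂ z g) (c : ℂ) :
    IsSolution V₁ V₂ z (fun y => f y - c • g y) := by
  refine ⟨hf.1.sub (hg.1.const_smul c), fun x => ?_⟩
  have e1 : (fun y => ((f y - c • g y : ℂ × ℂ)).1) = fun y => (f y).1 - c * (g y).1 := rfl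
  have e2 : (fun y => ((f y - c • g y : ℂ × ℂ)).2) = fun y => (f y).2 - c * (g y).2 := rfl
  have hf1 := congrArg Prod.fst (hf.2 x)
  have hf2 := congrArg Prod.snd (hf.2 x)
  have hg1 := congrArg Prod.fst (hg.2 x)
  have hg2 := congrArg Prod.snd (hg.2 x)
  simp only [matH, Prod.smul_fst, Prod.smul_snd, smul_eq_mul] at hf1 hf2 hg1 hg2
  rw [it2_eq] at hf1 hf2 hg1 hg2
  apply Prod.ext
  · simp only [matH, Prod.smul_fst, Prod.smul_snd, Prod.fst_sub, Prod.snd_sub,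
      smul_eq_mul, e1, e2, it2_eq]
    rw [deriv2_sub_smul (cd1 hf.1) (cd1 hg.1)]
    linear_combination hf1 - c * hg1
  · simp only [matH, Prod.smul_fst, Prod.smul_snd, Prod.fst_sub, Prod.snd_sub,
      smul_eq_mul, e1, e2, it2_eq]
    rw [deriv2_sub_smul (cd2 hf.1) (cd2 hg.1)]
    linear_combination hf2 - c * hg2

lemma deriv_conj {h : ℝ → ℂ} {x : ℝ} (hh : DifferentiableAt ℝ h x) :
    deriv (fun y => conj (h y)) x = conj (deriv h x) := by
  have H := Complex.conjCLE.toContinuousLinearMap.hasFDerivAt.comp_hasDerivAt x hh.hasDerivAt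
  simpa [Function.comp_def] using H.deriv

lemma deriv2_conj {h : ℝ → ℂ} (hh : ContDiff ℝ 2 h) (x : ℝ) :
    deriv (deriv (fun y => conj (h y))) x = conj (deriv (deriv h) x) := by
  have e : deriv (fun y => conj (h y)) = fun t => conj (deriv h t) := by
    funext t; exact deriv_conj (diff_of_cd2 hh t)
  rw [e, deriv_conj (diff_deriv_of_cd2 hh x)]

lemma contDiff_conj2 (hf : ContDiff ℝ 2 f) : ContDiff ℝ 2 (conj2 f) := by
  have hc : ContDiff ℝ 2 fun w : ℂ => conj w :=
    Complex.conjCLE.toContinuousLinearMap.contDiff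
  exact (hc.comp (cd1 hf)).prodMk (hc.comp (cd2 hf))

lemma sol_conj2 (hf : IsSolution V₁ V₂ z f) (hz : conj z = z) :
    IsSolution V₁ V₂ z (conj2 f) := by
  refine ⟨contDiff_conj2 hf.1, fun x => ?_⟩
  have hf1 := congrArg Prod.fst (hf.2 x)
  have hf2 := congrArg Prod.snd (hf.2 x)
  simp only [matH, Prod.smul_fst, Prod.smul_snd, smul_eq_mul] at hf1 hf2
  rw [it2_eq] at hf1 hf2
  have e1 : (fun y => (conj2 f y).1) = fun y => conj ((f y).1) := rfl
  have e2 : (fun y => (conj2 f y).2) = fun y => conj ((f y).2) := rfl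
  apply Prod.ext
  · simp only [matH, conj2, Prod.smul_fst, smul_eq_mul, it2_eq]
    rw [deriv2_conj (cd1 hf.1)]
    have := congrArg conj hf1
    simp only [map_add, map_sub, map_neg, _root_.map_mul, Complex.conj_ofReal] at this
    linear_combination this + conj (f x).1 * hz
  · simp only [matH, conj2, Prod.smul_snd, smul_eq_mul, it2_eq]
    rw [deriv2_conj (cd2 hf.1)]
    have := congrArg conj hf2
    simp only [map_add, map_sub, map_neg, _root_.map_mul, Complex.conj_ofReal] at this
    linear_combination this + conj (f x).2 * hz

lemma deriv2_reflect {h : ℝ → ℂ} (x : ℝ) :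
    deriv (deriv (fun y => h (-y))) x = deriv (deriv h) (-x) := by
  have e : deriv (fun y => h (-y)) = fun t => -(deriv h (-t)) := by
    funext t; exact deriv_comp_neg (f := h) t
  rw [e, deriv_comp_neg (f := fun s => -(deriv h s)) x,
    deriv.fun_neg (f := deriv h) (x := -x), neg_neg]

lemma sol_reflect (hf : IsSolution V₁ V₂ z f)
    (hV₁ : ∀ x, V₁ (-x) = V₁ x) (hV₂ : ∀ x, V₂ (-x) = V₂ x) :
    IsSolution V₁ V₂ z (fun y => f (-y)) := by
  refine ⟨hf.1.comp (contDiff_id.neg), fun x => ?_⟩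
  have hf1 := congrArg Prod.fst (hf.2 (-x))
  have hf2 := congrArg Prod.snd (hf.2 (-x))
  simp only [matH, Prod.smul_fst, Prod.smul_snd, smul_eq_mul] at hf1 hf2
  rw [it2_eq] at hf1 hf2
  have e1 : (fun y => ((f (-y) : ℂ × ℂ)).1) = fun y => (fun t => (f t).1) (-y) := rfl
  have e2 : (fun y => ((f (-y) : ℂ × ℂ)).2) = fun y => (fun t => (f t).2) (-y) := rfl
  apply Prod.ext
  · simp only [matH, conj2, Prod.smul_fst, smul_eq_mul, it2_eq]
    rw [deriv2_reflect (h := fun t => (f t).1)]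
    show -(deriv (deriv fun y => (f y).1) (-x)) + (f (-x)).1
        + (V₁ x : ℂ) * (f (-x)).1 + (V₂ x : ℂ) * (f (-x)).2 = z * (f (-x)).1
    rw [← hV₁ x, ← hV₂ x]
    linear_combination hf1
  · simp only [matH, conj2, Prod.smul_snd, smul_eq_mul, it2_eq]
    rw [deriv2_reflect (h := fun t => (f t).2)]
    show (deriv (deriv fun y => (f y).2) (-x)) - (f (-x)).2
        - (V₂ x : ℂ) * (f (-x)).1 - (V₁ x : ℂ) * (f (-x)).2 = z * (f (-x)).2
    rw [← hV₁ x, ← hV₂ x]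
    linear_combination hf2

/-- Wr is linear in the second argument under subtraction of a scalar multiple. -/
lemma wr_sub_smul (f g h : ℝ → ℂ × ℂ) (hg : ContDiff ℝ 2 g) (hh : ContDiff ℝ 2 h)
    (c : ℂ) (x : ℝ) :
    Wr f (fun y => g y - c • h y) x = Wr f g x - c * Wr f h x := by
  have e1 : (fun y => ((g y - c • h y : ℂ × ℂ)).1) = fun y => (g y).1 - c * (h y).1 := rfl
  have e2 : (fun y => ((g y - c • h y : ℂ × ℂ)).2) = fun y => (g y).2 - c * (h y).2 := rfl
  simp only [Wr, e1, e2, Prod.fst_sub, Prod.snd_sub, Prod.smul_fst, Prod.smul_snd,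
    smul_eq_mul]
  rw [deriv_fun_sub (diff_of_cd2 (cd1 hg) x) ((diff_of_cd2 (cd1 hh) x).const_mul c),
    deriv_const_mul c (diff_of_cd2 (cd1 hh) x),
    deriv_fun_sub (diff_of_cd2 (cd2 hg) x) ((diff_of_cd2 (cd2 hh) x).const_mul c),
    deriv_const_mul c (diff_of_cd2 (cd2 hh) x)]
  ring

end Pf


noncomputable section
open Real MeasureTheory Matrix Filter Topology
open scoped ComplexConjugate

namespace Pf

variable {V₁ V₂ : ℝ → ℝ} {z : ℂ} {f g : ℝ → ℂ × ℂ}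

lemma hasDerivAt_fst {h : ℝ → ℂ × ℂ} {e : ℂ × ℂ} {x : ℝ} (H : HasDerivAt h e x) :
    HasDerivAt (fun y => (h y).1) e.1 x := by
  simpa [Function.comp_def] using ((ContinuousLinearMap.fst ℝ ℂ ℂ).hasFDerivAt).comp_hasDerivAt x H

lemma hasDerivAt_snd {h : ℝ → ℂ × ℂ} {e : ℂ × ℂ} {x : ℝ} (H : HasDerivAt h e x) :
    HasDerivAt (fun y => (h y).2) e.2 x := by
  simpa [Function.comp_def] using ((ContinuousLinearMap.snd ℝ ℂ ℂ).hasFDerivAt).comp_hasDerivAt x H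

lemma hasDerivAt_cexp_lin (a : ℂ) (x : ℝ) :
    HasDerivAt (fun y : ℝ => Complex.exp (a * y)) (a * Complex.exp (a * x)) x := by
  have h1 : HasDerivAt (fun y : ℝ => (y : ℂ)) 1 x := by
    simpa using (hasDerivAt_id x).ofReal_comp
  have h2 : HasDerivAt (fun y : ℝ => a * (y : ℂ)) a x := by simpa using h1.const_mul a
  simpa [mul_comm] using h2.cexp

/-- Expansion of the Wronskian of two functions written in Jost-type form. -/
lemma wr_of_expansion {a b : ℂ} {u v : ℂ × ℂ} {ε δ : ℝ → ℂ × ℂ}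
    (hf : ∀ y, f y = Complex.exp (a * (y : ℂ)) • (u + ε y))
    (hg : ∀ y, g y = Complex.exp (b * (y : ℂ)) • (v + δ y))
    (hε : Differentiable ℝ ε) (hδ : Differentiable ℝ δ) (x : ℝ) :
    Wr f g x = Complex.exp ((a + b) * x) *
      ((a * (u.1 + (ε x).1) + (deriv ε x).1) * (v.1 + (δ x).1)
        + (a * (u.2 + (ε x).2) + (deriv ε x).2) * (v.2 + (δ x).2)
        - (u.1 + (ε x).1) * (b * (v.1 + (δ x).1) + (deriv δ x).1)
        - (u.2 + (ε x).2) * (b * (v.2 + (δ x).2) + (deriv δ x).2)) := by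
  have ef1 : (fun y => (f y).1) = fun y : ℝ => Complex.exp (a * (y : ℂ)) * (u.1 + (ε y).1) := by
    funext y; rw [hf y]; rfl
  have ef2 : (fun y => (f y).2) = fun y : ℝ => Complex.exp (a * (y : ℂ)) * (u.2 + (ε y).2) := by
    funext y; rw [hf y]; rfl
  have eg1 : (fun y => (g y).1) = fun y : ℝ => Complex.exp (b * (y : ℂ)) * (v.1 + (δ y).1) := by
    funext y; rw [hg y]; rfl
  have eg2 : (fun y => (g y).2) = fun y : ℝ => Complex.exp (b * (y : ℂ)) * (v.2 + (δ y).2) := by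
    funext y; rw [hg y]; rfl
  have Hf1 : HasDerivAt (fun y => (f y).1)
      (a * Complex.exp (a * x) * (u.1 + (ε x).1)
        + Complex.exp (a * x) * (deriv ε x).1) x := by
    rw [ef1]
    exact (hasDerivAt_cexp_lin a x).mul ((hasDerivAt_fst (hε x).hasDerivAt).const_add u.1)
  have Hf2 : HasDerivAt (fun y => (f y).2)
      (a * Complex.exp (a * x) * (u.2 + (ε x).2)
        + Complex.exp (a * x) * (deriv ε x).2) x := by
    rw [ef2]
    exact (hasDerivAt_cexp_lin a x).mul ((hasDerivAt_snd (hε x).hasDerivAt).const_add u.2)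
  have Hg1 : HasDerivAt (fun y => (g y).1)
      (b * Complex.exp (b * x) * (v.1 + (δ x).1)
        + Complex.exp (b * x) * (deriv δ x).1) x := by
    rw [eg1]
    exact (hasDerivAt_cexp_lin b x).mul ((hasDerivAt_fst (hδ x).hasDerivAt).const_add v.1)
  have Hg2 : HasDerivAt (fun y => (g y).2)
      (b * Complex.exp (b * x) * (v.2 + (δ x).2)
        + Complex.exp (b * x) * (deriv δ x).2) x := by
    rw [eg2]
    exact (hasDerivAt_cexp_lin b x).mul ((hasDerivAt_snd (hδ x).hasDerivAt).const_add v.2)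
  have eexp : Complex.exp ((a + b) * x) = Complex.exp (a * x) * Complex.exp (b * x) := by
    rw [← Complex.exp_add]; ring_nf
  simp only [Wr, Hf1.deriv, Hf2.deriv, Hg1.deriv, Hg2.deriv, hf x, hg x, eexp,
    Prod.smul_fst, Prod.smul_snd, Prod.fst_add, Prod.snd_add, smul_eq_mul]
  ring

lemma tendsto_comp_fst {ε : ℝ → ℂ × ℂ} (h : Tendsto ε atTop (𝓝 0)) :
    Tendsto (fun x => (ε x).1) atTop (𝓝 0) := by
  simpa [Function.comp_def] using (continuous_fst.tendsto (0 : ℂ × ℂ)).comp h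

lemma tendsto_comp_snd {ε : ℝ → ℂ × ℂ} (h : Tendsto ε atTop (𝓝 0)) :
    Tendsto (fun x => (ε x).2) atTop (𝓝 0) := by
  simpa [Function.comp_def] using (continuous_snd.tendsto (0 : ℂ × ℂ)).comp h

lemma tendsto_psi {a b : ℂ} {u v : ℂ × ℂ} {ε δ : ℝ → ℂ × ℂ}
    (hε0 : Tendsto ε atTop (𝓝 0)) (hε1 : Tendsto (deriv ε) atTop (𝓝 0))
    (hδ0 : Tendsto δ atTop (𝓝 0)) (hδ1 : Tendsto (deriv δ) atTop (𝓝 0)) :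
    Tendsto (fun x =>
      (a * (u.1 + (ε x).1) + (deriv ε x).1) * (v.1 + (δ x).1)
        + (a * (u.2 + (ε x).2) + (deriv ε x).2) * (v.2 + (δ x).2)
        - (u.1 + (ε x).1) * (b * (v.1 + (δ x).1) + (deriv δ x).1)
        - (u.2 + (ε x).2) * (b * (v.2 + (δ x).2) + (deriv δ x).2)) atTop
      (𝓝 ((a - b) * (u.1 * v.1 + u.2 * v.2))) := by
  have e1 := tendsto_comp_fst hε0
  have e2 := tendsto_comp_snd hε0
  have e1' := tendsto_comp_fst hε1
  have e2' := tendsto_comp_snd hε1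
  have d1 := tendsto_comp_fst hδ0
  have d2 := tendsto_comp_snd hδ0
  have d1' := tendsto_comp_fst hδ1
  have d2' := tendsto_comp_snd hδ1
  have T1 : Tendsto (fun x => (a * (u.1 + (ε x).1) + (deriv ε x).1) * (v.1 + (δ x).1))
      atTop (𝓝 ((a * (u.1 + 0) + 0) * (v.1 + 0))) :=
    (((tendsto_const_nhds.add e1).const_mul a).add e1').mul (tendsto_const_nhds.add d1)
  have T2 : Tendsto (fun x => (a * (u.2 + (ε x).2) + (deriv ε x).2) * (v.2 + (δ x).2))
      atTop (𝓝 ((a * (u.2 + 0) + 0) * (v.2 + 0))) :=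
    (((tendsto_const_nhds.add e2).const_mul a).add e2').mul (tendsto_const_nhds.add d2)
  have T3 : Tendsto (fun x => (u.1 + (ε x).1) * (b * (v.1 + (δ x).1) + (deriv δ x).1))
      atTop (𝓝 ((u.1 + 0) * (b * (v.1 + 0) + 0))) :=
    (tendsto_const_nhds.add e1).mul (((tendsto_const_nhds.add d1).const_mul b).add d1')
  have T4 : Tendsto (fun x => (u.2 + (ε x).2) * (b * (v.2 + (δ x).2) + (deriv δ x).2))
      atTop (𝓝 ((u.2 + 0) * (b * (v.2 + 0) + 0))) :=
    (tendsto_const_nhds.add e2).mul (((tendsto_const_nhds.add d2).const_mul b).add d2')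
  have H := ((T1.add T2).sub T3).sub T4
  have ev : (a * (u.1 + 0) + 0) * (v.1 + 0) + (a * (u.2 + 0) + 0) * (v.2 + 0)
      - (u.1 + 0) * (b * (v.1 + 0) + 0) - (u.2 + 0) * (b * (v.2 + 0) + 0)
      = (a - b) * (u.1 * v.1 + u.2 * v.2) := by ring
  rwa [ev] at H

/-- constant Wronskian equals its limit: case of cancelling exponents -/
lemma wr_value_same (hsf : IsSolution V₁ V₂ z f) (hsg : IsSolution V₁ V₂ z g)
    {a b : ℂ} {u v : ℂ × ℂ} {ε δ : ℝ → ℂ × ℂ}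
    (hf : ∀ y, f y = Complex.exp (a * (y : ℂ)) • (u + ε y))
    (hg : ∀ y, g y = Complex.exp (b * (y : ℂ)) • (v + δ y))
    (hε : Differentiable ℝ ε) (hδ : Differentiable ℝ δ)
    (hε0 : Tendsto ε atTop (𝓝 0)) (hε1 : Tendsto (deriv ε) atTop (𝓝 0))
    (hδ0 : Tendsto δ atTop (𝓝 0)) (hδ1 : Tendsto (deriv δ) atTop (𝓝 0))
    (hab : a + b = 0) (x : ℝ) :
    Wr f g x = (a - b) * (u.1 * v.1 + u.2 * v.2) := by
  have hWr : Tendsto (Wr f g) atTop (𝓝 ((a - b) * (u.1 * v.1 + u.2 * v.2))) := by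
    have := tendsto_psi (a := a) (b := b) (u := u) (v := v) hε0 hε1 hδ0 hδ1
    apply this.congr
    intro y
    rw [wr_of_expansion hf hg hε hδ y, hab]
    simp
  have hconst : Tendsto (Wr f g) atTop (𝓝 (Wr f g x)) := by
    have : Wr f g = fun _ => Wr f g x := funext fun y => wr_const hsf hsg y x
    rw [this]; exact tendsto_const_nhds
  exact tendsto_nhds_unique hconst hWr

/-- constant Wronskian equals its limit: case of decaying exponent -/
lemma wr_value_zero (hsf : IsSolution V₁ V₂ z f) (hsg : IsSolution V₁ V₂ z g)
    {a b : ℂ} {u v : ℂ × ℂ} {ε δ : ℝ → ℂ × ℂ}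
    (hf : ∀ y, f y = Complex.exp (a * (y : ℂ)) • (u + ε y))
    (hg : ∀ y, g y = Complex.exp (b * (y : ℂ)) • (v + δ y))
    (hε : Differentiable ℝ ε) (hδ : Differentiable ℝ δ)
    (hε0 : Tendsto ε atTop (𝓝 0)) (hε1 : Tendsto (deriv ε) atTop (𝓝 0))
    (hδ0 : Tendsto δ atTop (𝓝 0)) (hδ1 : Tendsto (deriv δ) atTop (𝓝 0))
    (hab : (a + b).re < 0) (x : ℝ) :
    Wr f g x = 0 := by
  have hexp : Tendsto (fun x : ℝ => Complex.exp ((a + b) * x)) atTop (𝓝 0) := by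
    apply squeeze_zero_norm' (a := fun x : ℝ => Real.exp ((a + b).re * x))
    · filter_upwards with y
      rw [Complex.norm_exp]
      apply le_of_eq
      congr 1
      simp [Complex.mul_re]
    · exact Real.tendsto_exp_atBot.comp ((tendsto_const_mul_atBot_of_neg hab).2 tendsto_id)
  have hWr : Tendsto (Wr f g) atTop (𝓝 0) := by
    have H := hexp.mul (tendsto_psi (a := a) (b := b) (u := u) (v := v) hε0 hε1 hδ0 hδ1)
    rw [zero_mul] at H
    apply H.congr
    intro y
    rw [wr_of_expansion hf hg hε hδ y]
  have hconst : Tendsto (Wr f g) atTop (𝓝 (Wr f g x)) := by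
    have : Wr f g = fun _ => Wr f g x := funext fun y => wr_const hsf hsg y x
    rw [this]; exact tendsto_const_nhds
  exact tendsto_nhds_unique hconst hWr

end Pf


noncomputable section
open Real MeasureTheory Matrix Filter Topology
open scoped ComplexConjugate

namespace Pf

lemma mu_pos (lam : ℝ) : 0 < mu lam := Real.sqrt_pos.2 (by positivity)

lemma tendsto_of_expbound {h : ℝ → ℂ × ℂ} {K γ x0 : ℝ} (hγ : 0 < γ)
    (hb : ∀ x, x0 ≤ x → ‖h x‖ ≤ K * Real.exp (-γ * x)) : Tendsto h atTop (𝓝 0) := by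
  apply squeeze_zero_norm' (eventually_atTop.2 ⟨x0, hb⟩)
  have base : Tendsto (fun x : ℝ => Real.exp (-γ * x)) atTop (𝓝 0) :=
    Real.tendsto_exp_atBot.comp
      ((tendsto_const_mul_atBot_of_neg (by linarith : -γ < 0)).2 tendsto_id)
  simpa using base.const_mul K

lemma differentiable_conj2 {h : ℝ → ℂ × ℂ} (hh : Differentiable ℝ h) :
    Differentiable ℝ (conj2 h) := by
  have hc : Differentiable ℝ fun w : ℂ => conj w :=
    Complex.conjCLE.toContinuousLinearMap.differentiable
  exact (hc.comp (fun x => hasDerivAt_fst (hh x).hasDerivAt |>.differentiableAt)).prodMk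
    (hc.comp (fun x => hasDerivAt_snd (hh x).hasDerivAt |>.differentiableAt))

lemma hasDerivAt_conj2 {h : ℝ → ℂ × ℂ} {e : ℂ × ℂ} {x : ℝ} (H : HasDerivAt h e x) :
    HasDerivAt (conj2 h) (conj e.1, conj e.2) x := by
  have h1 : HasDerivAt (fun y => conj ((h y).1)) (conj e.1) x := by
    simpa [Function.comp_def] using
      Complex.conjCLE.toContinuousLinearMap.hasFDerivAt.comp_hasDerivAt x (hasDerivAt_fst H)
  have h2 : HasDerivAt (fun y => conj ((h y).2)) (conj e.2) x := by
    simpa [Function.comp_def] using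
      Complex.conjCLE.toContinuousLinearMap.hasFDerivAt.comp_hasDerivAt x (hasDerivAt_snd H)
  exact h1.prodMk h2

lemma deriv_conj2 {h : ℝ → ℂ × ℂ} (hh : Differentiable ℝ h) (x : ℝ) :
    deriv (conj2 h) x = (conj (deriv h x).1, conj (deriv h x).2) :=
  (hasDerivAt_conj2 (hh x).hasDerivAt).deriv

lemma norm_conj2 {h : ℝ → ℂ × ℂ} (x : ℝ) : ‖conj2 h x‖ = ‖h x‖ := by
  simp [conj2, Prod.norm_def]

lemma tendsto_conj2 {h : ℝ → ℂ × ℂ} (H : Tendsto h atTop (𝓝 0)) :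
    Tendsto (conj2 h) atTop (𝓝 0) := by
  rw [tendsto_zero_iff_norm_tendsto_zero] at H ⊢
  apply H.congr
  intro x
  exact (norm_conj2 x).symm

lemma real_smul_prod (r : ℝ) (p : ℂ × ℂ) : r • p = ((r : ℂ)) • p := by
  apply Prod.ext <;> simp [Prod.smul_fst, Prod.smul_snd, Complex.real_smul]

lemma diff_cexp_lin (a : ℂ) : Differentiable ℝ fun y : ℝ => Complex.exp (a * y) :=
  fun x => (hasDerivAt_cexp_lin a x).differentiableAt

/-- All the Wronskian values obtained from the asymptotics. -/
lemma wr_vals {γ : ℝ} {V₁ V₂ : ℝ → ℝ} (hγ : 0 < γ) {lam : ℝ}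
    {f₁ f₃ f₄t : ℝ → ℂ × ℂ}
    (h1 : IsSolution V₁ V₂ (((1 + lam ^ 2 : ℝ) : ℂ)) f₁)
    (h3 : IsSolution V₁ V₂ (((1 + lam ^ 2 : ℝ) : ℂ)) f₃)
    (h4t : IsSolution V₁ V₂ (((1 + lam ^ 2 : ℝ) : ℂ)) f₄t)
    (hJost : JostAsymp γ lam f₁ f₃ f₄t) :
    (∀ x, Wr f₁ (conj2 f₁) x = 2 * Complex.I * lam) ∧
    (∀ x, Wr f₁ f₃ x = 0) ∧
    (∀ x, Wr (conj2 f₁) f₃ x = 0) ∧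
    (∀ x, Wr f₃ f₄t x = -(2 * ((mu lam : ℝ) : ℂ))) := by
  obtain ⟨x0, C, hx0, hC, hJ⟩ := hJost
  set μ := mu lam with hμdef
  have hμ : 0 < μ := mu_pos lam
  have h2sol : IsSolution V₁ V₂ (((1 + lam ^ 2 : ℝ) : ℂ)) (conj2 f₁) :=
    sol_conj2 h1 (Complex.conj_ofReal _)
  -- the three error terms
  set ε₁ : ℝ → ℂ × ℂ := fun y : ℝ =>
    Complex.exp (-Complex.I * (lam : ℂ) * (y : ℂ)) • f₁ y - ((1 : ℂ), (0 : ℂ)) with hε₁def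
  set ε₃ : ℝ → ℂ × ℂ := fun y : ℝ =>
    Real.exp (mu lam * y) • f₃ y - ((0 : ℂ), (1 : ℂ)) with hε₃def
  set ε₄ : ℝ → ℂ × ℂ := fun y : ℝ =>
    Real.exp (-(mu lam) * y) • f₄t y - ((0 : ℂ), (1 : ℂ)) with hε₄def
  -- differentiability of the error terms
  have hd1 : Differentiable ℝ f₁ := h1.1.differentiable (by norm_num)
  have hd3 : Differentiable ℝ f₃ := h3.1.differentiable (by norm_num)
  have hd4 : Differentiable ℝ f₄t := h4t.1.differentiable (by norm_num)
  have hde1 : Differentiable ℝ ε₁ := by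
    rw [hε₁def]
    apply Differentiable.sub_const
    have : Differentiable ℝ fun y : ℝ => Complex.exp (-Complex.I * (lam : ℂ) * (y : ℂ)) := by
      simpa [mul_assoc] using diff_cexp_lin (-Complex.I * (lam : ℂ))
    exact this.smul hd1
  have hde3 : Differentiable ℝ ε₃ := by
    rw [hε₃def]
    apply Differentiable.sub_const
    exact ((Real.differentiable_exp.comp
      ((differentiable_id.const_mul (mu lam)))).smul hd3)
  have hde4 : Differentiable ℝ ε₄ := by
    rw [hε₄def]
    apply Differentiable.sub_const
    exact ((Real.differentiable_exp.comp
      ((differentiable_id.const_mul (-(mu lam))))).smul hd4)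
  -- tendsto facts
  have ht1 : Tendsto ε₁ atTop (𝓝 0) := by
    apply tendsto_of_expbound (K := C * mu lam ^ ((0 : ℕ) - 1 : ℝ)) hγ
    intro x hx
    have := (hJ 0 (by norm_num) x hx).1
    simpa [iteratedDeriv_zero] using this
  have ht1' : Tendsto (deriv ε₁) atTop (𝓝 0) := by
    apply tendsto_of_expbound (K := C * mu lam ^ ((1 : ℕ) - 1 : ℝ)) hγ
    intro x hx
    have := (hJ 1 (by norm_num) x hx).1
    simpa [iteratedDeriv_one] using this
  have ht3 : Tendsto ε₃ atTop (𝓝 0) := by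
    apply tendsto_of_expbound (K := C * mu lam ^ ((0 : ℕ) - 1 : ℝ)) hγ
    intro x hx
    have := (hJ 0 (by norm_num) x hx).2.1
    simpa [iteratedDeriv_zero] using this
  have ht3' : Tendsto (deriv ε₃) atTop (𝓝 0) := by
    apply tendsto_of_expbound (K := C * mu lam ^ ((1 : ℕ) - 1 : ℝ)) hγ
    intro x hx
    have := (hJ 1 (by norm_num) x hx).2.1
    simpa [iteratedDeriv_one] using this
  have ht4 : Tendsto ε₄ atTop (𝓝 0) := by
    apply tendsto_of_expbound (K := C * mu lam ^ ((0 : ℕ) - 1 : ℝ)) hγ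
    intro x hx
    have := (hJ 0 (by norm_num) x hx).2.2
    simpa [iteratedDeriv_zero] using this
  have ht4' : Tendsto (deriv ε₄) atTop (𝓝 0) := by
    apply tendsto_of_expbound (K := C * mu lam ^ ((1 : ℕ) - 1 : ℝ)) hγ
    intro x hx
    have := (hJ 1 (by norm_num) x hx).2.2
    simpa [iteratedDeriv_one] using this
  -- expansions
  have hexp1 : ∀ y : ℝ, f₁ y
      = Complex.exp ((Complex.I * (lam : ℂ)) * (y : ℂ)) • (((1 : ℂ), (0 : ℂ)) + ε₁ y) := by
    intro y
    rw [hε₁def]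
    simp only [add_sub_cancel]
    rw [smul_smul, ← Complex.exp_add]
    have : Complex.I * (lam : ℂ) * (y : ℂ) + -Complex.I * (lam : ℂ) * (y : ℂ) = 0 := by ring
    rw [this, Complex.exp_zero, one_smul]
  have hexp2 : ∀ y : ℝ, conj2 f₁ y
      = Complex.exp ((-(Complex.I * (lam : ℂ))) * (y : ℂ))
        • (((1 : ℂ), (0 : ℂ)) + conj2 ε₁ y) := by
    intro y
    have h := hexp1 y
    have e1 : (f₁ y).1 = Complex.exp ((Complex.I * (lam : ℂ)) * (y : ℂ)) * (1 + (ε₁ y).1) := by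
      rw [h]; rfl
    have e2 : (f₁ y).2 = Complex.exp ((Complex.I * (lam : ℂ)) * (y : ℂ)) * (0 + (ε₁ y).2) := by
      rw [h]; rfl
    have hconjexp : conj (Complex.exp ((Complex.I * (lam : ℂ)) * (y : ℂ)))
        = Complex.exp ((-(Complex.I * (lam : ℂ))) * (y : ℂ)) := by
      rw [← Complex.exp_conj]
      congr 1
      simp [_root_.map_mul, Complex.conj_I, Complex.conj_ofReal]
    apply Prod.ext
    · show conj ((f₁ y).1) = _
      rw [e1]
      simp only [_root_.map_mul, map_add, _root_.map_one, hconjexp]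
      rfl
    · show conj ((f₁ y).2) = _
      rw [e2]
      simp only [_root_.map_mul, map_add, _root_.map_zero, hconjexp]
      rfl
  have hexp3 : ∀ y : ℝ, f₃ y
      = Complex.exp ((-(μ : ℂ)) * (y : ℂ)) • (((0 : ℂ), (1 : ℂ)) + ε₃ y) := by
    intro y
    rw [hε₃def]
    simp only [add_sub_cancel]
    rw [real_smul_prod, smul_smul, Complex.ofReal_exp, ← Complex.exp_add]
    have : (-(μ : ℂ)) * (y : ℂ) + ((mu lam * y : ℝ) : ℂ) = 0 := by
      push_cast
      rw [← hμdef]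
      ring
    rw [this, Complex.exp_zero, one_smul]
  have hexp4 : ∀ y : ℝ, f₄t y
      = Complex.exp (((μ : ℂ)) * (y : ℂ)) • (((0 : ℂ), (1 : ℂ)) + ε₄ y) := by
    intro y
    rw [hε₄def]
    simp only [add_sub_cancel]
    rw [real_smul_prod, smul_smul, Complex.ofReal_exp, ← Complex.exp_add]
    have : ((μ : ℂ)) * (y : ℂ) + ((-(mu lam) * y : ℝ) : ℂ) = 0 := by
      push_cast
      rw [← hμdef]
      ring
    rw [this, Complex.exp_zero, one_smul]
  -- conj2 ε₁ facts
  have hde2 : Differentiable ℝ (conj2 ε₁) := differentiable_conj2 hde1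
  have ht2 : Tendsto (conj2 ε₁) atTop (𝓝 0) := tendsto_conj2 ht1
  have ht2' : Tendsto (deriv (conj2 ε₁)) atTop (𝓝 0) := by
    have e : deriv (conj2 ε₁) = conj2 (deriv ε₁) := by
      funext x
      rw [deriv_conj2 hde1 x]
      rfl
    rw [e]
    exact tendsto_conj2 ht1'
  refine ⟨?_, ?_, ?_, ?_⟩
  · -- Wr f₁ f₂ = 2 I lam
    intro x
    have := wr_value_same h1 h2sol hexp1 hexp2 hde1 hde2 ht1 ht1' ht2 ht2'
      (by ring) x
    rw [this]
    ring
  · -- Wr f₁ f₃ = 0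
    intro x
    apply wr_value_zero h1 h3 hexp1 hexp3 hde1 hde3 ht1 ht1' ht3 ht3' ?_ x
    simp [Complex.add_re, Complex.mul_re, Complex.I_re, Complex.I_im,
      Complex.ofReal_re, Complex.ofReal_im, hμ]
  · -- Wr f₂ f₃ = 0
    intro x
    apply wr_value_zero h2sol h3 hexp2 hexp3 hde2 hde3 ht2 ht2' ht3 ht3' ?_ x
    simp [Complex.add_re, Complex.mul_re, Complex.I_re, Complex.I_im,
      Complex.ofReal_re, Complex.ofReal_im, hμ]
  · -- Wr f₃ f₄t = -2 μ
    intro x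
    have := wr_value_same h3 h4t hexp3 hexp4 hde3 hde4 ht3 ht3' ht4 ht4'
      (by ring) x
    rw [this]
    ring
end Pf


noncomputable section
open Real MeasureTheory Matrix Filter Topology

namespace Pf

variable {V₁ V₂ : ℝ → ℝ} {z : ℂ}

abbrev Mat2 := Matrix (Fin 2) (Fin 2) ℂ

lemma mderiv_matOf (u v : ℝ → ℂ × ℂ) (x : ℝ) :
    mderiv (matOf u v) x
      = !![deriv (fun y => (u y).1) x, deriv (fun y => (v y).1) x;
          deriv (fun y => (u y).2) x, deriv (fun y => (v y).2) x] := by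
  ext i j
  fin_cases i <;> fin_cases j <;> simp [mderiv, matOf]

lemma mWr_matOf (u v w t : ℝ → ℂ × ℂ) (x : ℝ) :
    mWr (matOf u v) (matOf w t) x
      = !![Wr u w x, Wr u t x; Wr v w x, Wr v t x] := by
  rw [mWr, mderiv_matOf, mderiv_matOf]
  ext i j
  fin_cases i <;> fin_cases j <;>
    simp [Matrix.mul_apply, Fin.sum_univ_two, Matrix.transpose_apply, matOf, Wr, Matrix.vecHead, Matrix.vecTail] <;> ring

lemma matOf_reflect (u v : ℝ → ℂ × ℂ) :
    (fun t : ℝ => matOf u v (-t)) = matOf (fun y => u (-y)) (fun y => v (-y)) := rfl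

lemma mWr_reflect (u v w t : ℝ → ℂ × ℂ) (x : ℝ) :
    mWr (fun s : ℝ => matOf u v (-s)) (fun s : ℝ => matOf w t (-s)) x
      = - mWr (matOf u v) (matOf w t) (-x) := by
  rw [matOf_reflect u v, matOf_reflect w t, mWr_matOf, mWr_matOf,
    wr_reflect, wr_reflect, wr_reflect, wr_reflect]
  ext i j
  fin_cases i <;> fin_cases j <;> simp

lemma mWr_matOf_const {u v w t : ℝ → ℂ × ℂ}
    (hu : IsSolution V₁ V₂ z u) (hv : IsSolution V₁ V₂ z v)
    (hw : IsSolution V₁ V₂ z w) (ht : IsSolution V₁ V₂ z t) (x y : ℝ) :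
    mWr (matOf u v) (matOf w t) x = mWr (matOf u v) (matOf w t) y := by
  rw [mWr_matOf, mWr_matOf, wr_const hu hw x y, wr_const hu ht x y,
    wr_const hv hw x y, wr_const hv ht x y]

lemma matOf_entry_diff {u v : ℝ → ℂ × ℂ} (hu : ContDiff ℝ 2 u) (hv : ContDiff ℝ 2 v) :
    ∀ i j, Differentiable ℝ fun y => matOf u v y i j := by
  intro i j
  fin_cases i <;> fin_cases j <;>
    simp only [matOf, Matrix.cons_val', Matrix.cons_val_zero, Matrix.cons_val_one,
      Matrix.head_cons, Matrix.empty_val', Matrix.cons_val_fin_one, Matrix.head_fin_const] <;>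
    first
      | exact diff_of_cd2 (cd1 hu)
      | exact diff_of_cd2 (cd2 hu)
      | exact diff_of_cd2 (cd1 hv)
      | exact diff_of_cd2 (cd2 hv)

lemma mderiv_comb {F G : ℝ → Mat2}
    (hF : ∀ i j, Differentiable ℝ fun y => F y i j)
    (hG : ∀ i j, Differentiable ℝ fun y => G y i j) (A B : Mat2) (x : ℝ) :
    mderiv (fun y => F y * A + G y * B) x = mderiv F x * A + mderiv G x * B := by
  ext i j
  have e : (fun y => (F y * A + G y * B) i j)
      = fun y => (F y i 0 * A 0 j + F y i 1 * A 1 j)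
        + (G y i 0 * B 0 j + G y i 1 * B 1 j) := by
    funext y
    simp [Matrix.add_apply, Matrix.mul_apply, Fin.sum_univ_two]
  have d1 : DifferentiableAt ℝ (fun y => F y i 0 * A 0 j + F y i 1 * A 1 j) x :=
    (((hF i 0) x).mul_const _).add (((hF i 1) x).mul_const _)
  have d2 : DifferentiableAt ℝ (fun y => G y i 0 * B 0 j + G y i 1 * B 1 j) x :=
    (((hG i 0) x).mul_const _).add (((hG i 1) x).mul_const _)
  simp only [mderiv, Matrix.of_apply, e]
  rw [deriv_fun_add d1 d2,
    deriv_fun_add (((hF i 0) x).mul_const _) (((hF i 1) x).mul_const _),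
    deriv_fun_add (((hG i 0) x).mul_const _) (((hG i 1) x).mul_const _),
    deriv_mul_const ((hF i 0) x), deriv_mul_const ((hF i 1) x),
    deriv_mul_const ((hG i 0) x), deriv_mul_const ((hG i 1) x)]
  simp [Matrix.add_apply, Matrix.mul_apply, Fin.sum_univ_two, mderiv]

lemma mderiv_zero_fun (x : ℝ) : mderiv (fun _ : ℝ => (0 : Mat2)) x = 0 := by
  ext i j
  simp [mderiv]

/-- the block-inversion core -/
lemma blocks_core (g1 g2 g1' g2' D Dinv : Mat2)
    (hDl : Dinv * D = 1)
    (K1 : g1'ᵀ * g2 - g1ᵀ * g2' = D) (K2 : g2'ᵀ * g1 - g2ᵀ * g1' = -D)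
    (K3 : g1'ᵀ * g1 - g1ᵀ * g1' = 0) (K4 : g2'ᵀ * g2 - g2ᵀ * g2' = 0) :
    (g2 * (Dinv * g1'ᵀ) - g1 * (Dinv * g2'ᵀ) = 1) ∧
    (g1 * (Dinv * g2ᵀ) - g2 * (Dinv * g1ᵀ) = 0) := by
  have e2 : g2ᵀ * g1' - g2'ᵀ * g1 = D := by
    rw [← neg_sub, K2, neg_neg]
  have e4 : g2ᵀ * g2' - g2'ᵀ * g2 = 0 := by
    rw [← neg_sub, K4, neg_zero]
  have hTS : Matrix.fromBlocks (-(Dinv * g2'ᵀ)) (Dinv * g2ᵀ) (Dinv * g1'ᵀ) (-(Dinv * g1ᵀ))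
      * Matrix.fromBlocks g1 g2 g1' g2' = 1 := by
    rw [Matrix.fromBlocks_multiply, ← Matrix.fromBlocks_one]
    have b11 : -(Dinv * g2'ᵀ) * g1 + Dinv * g2ᵀ * g1' = 1 := by
      calc -(Dinv * g2'ᵀ) * g1 + Dinv * g2ᵀ * g1'
          = Dinv * (g2ᵀ * g1' - g2'ᵀ * g1) := by noncomm_ring
        _ = 1 := by rw [e2, hDl]
    have b12 : -(Dinv * g2'ᵀ) * g2 + Dinv * g2ᵀ * g2' = 0 := by
      calc -(Dinv * g2'ᵀ) * g2 + Dinv * g2ᵀ * g2'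
          = Dinv * (g2ᵀ * g2' - g2'ᵀ * g2) := by noncomm_ring
        _ = 0 := by rw [e4, mul_zero]
    have b21 : Dinv * g1'ᵀ * g1 + -(Dinv * g1ᵀ) * g1' = 0 := by
      calc Dinv * g1'ᵀ * g1 + -(Dinv * g1ᵀ) * g1'
          = Dinv * (g1'ᵀ * g1 - g1ᵀ * g1') := by noncomm_ring
        _ = 0 := by rw [K3, mul_zero]
    have b22 : Dinv * g1'ᵀ * g2 + -(Dinv * g1ᵀ) * g2' = 1 := by
      calc Dinv * g1'ᵀ * g2 + -(Dinv * g1ᵀ) * g2'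
          = Dinv * (g1'ᵀ * g2 - g1ᵀ * g2') := by noncomm_ring
        _ = 1 := by rw [K1, hDl]
    rw [b11, b12, b21, b22]
  have hST := mul_eq_one_comm.mp hTS
  rw [Matrix.fromBlocks_multiply, ← Matrix.fromBlocks_one] at hST
  obtain ⟨c11, c12, c21, c22⟩ := Matrix.fromBlocks_inj.mp hST
  constructor
  · calc g2 * (Dinv * g1'ᵀ) - g1 * (Dinv * g2'ᵀ)
        = g1 * -(Dinv * g2'ᵀ) + g2 * (Dinv * g1'ᵀ) := by noncomm_ring
      _ = 1 := c11
  · calc g1 * (Dinv * g2ᵀ) - g2 * (Dinv * g1ᵀ)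
        = g1 * (Dinv * g2ᵀ) + g2 * -(Dinv * g1ᵀ) := by noncomm_ring
      _ = 0 := c12

end Pf


noncomputable section
open Real MeasureTheory Matrix Filter Topology

namespace Pf

lemma diag_inv_mul {a b : ℂ} (ha : a ≠ 0) (hb : b ≠ 0) :
    (!![a⁻¹, 0; 0, b⁻¹] : Mat2) * !![a, 0; 0, b] = 1 := by
  ext i j
  fin_cases i <;> fin_cases j <;>
    simp [Matrix.mul_apply, Fin.sum_univ_two, Matrix.one_apply,
      inv_mul_cancel₀ ha, inv_mul_cancel₀ hb]

lemma main (γ : ℝ) (V₁ V₂ : ℝ → ℝ) (hV : PotentialHyp γ V₁ V₂)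
    (lam : ℝ) (hlam : lam ≠ 0) (f₁ f₃ f₄t : ℝ → ℂ × ℂ)
    (h1 : IsSolution V₁ V₂ (((1 + lam ^ 2 : ℝ) : ℂ)) f₁)
    (h3 : IsSolution V₁ V₂ (((1 + lam ^ 2 : ℝ) : ℂ)) f₃)
    (h4t : IsSolution V₁ V₂ (((1 + lam ^ 2 : ℝ) : ℂ)) f₄t)
    (hJost : JostAsymp γ lam f₁ f₃ f₄t)
    (c₁ c₂ : ℂ)
    (hc1 : ∀ x : ℝ, Wr f₁ (f4def f₁ f₄t c₁ c₂) x = 0)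
    (hc2 : ∀ x : ℝ, Wr (conj2 f₁) (f4def f₁ f₄t c₁ c₂) x = 0) :
    (∃! AB : Mat2 × Mat2,
      ∀ x : ℝ, matOf f₁ f₃ x
        = matOf (conj2 f₁) (f4def f₁ f₄t c₁ c₂) (-x) * AB.1
          + matOf f₁ f₃ (-x) * AB.2) ∧
    (∀ A B : Mat2,
      (∀ x : ℝ, matOf f₁ f₃ x
        = matOf (conj2 f₁) (f4def f₁ f₄t c₁ c₂) (-x) * A + matOf f₁ f₃ (-x) * B) →
      (∀ x : ℝ, matOf f₁ f₃ (-x)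
          = matOf (conj2 f₁) (f4def f₁ f₄t c₁ c₂) x * A + matOf f₁ f₃ x * B) ∧
      (∀ x : ℝ, mWr (matOf f₁ f₃) (fun s => matOf f₁ f₃ (-s)) x
          = Aᵀ * ((2 * Complex.I * (lam : ℂ)) • pmat - (2 * ((mu lam : ℝ) : ℂ)) • qmat)) ∧
      (∀ x : ℝ, mWr (matOf f₁ f₃) (fun s => matOf (conj2 f₁) (f4def f₁ f₄t c₁ c₂) (-s)) x
          = -(Bᵀ * ((2 * Complex.I * (lam : ℂ)) • pmat - (2 * ((mu lam : ℝ) : ℂ)) • qmat)))) := by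
  obtain ⟨hγ0, hγ1, _, _, hV1e, hV2e, _⟩ := hV
  set f₂ : ℝ → ℂ × ℂ := conj2 f₁ with hf₂
  set f₄ : ℝ → ℂ × ℂ := f4def f₁ f₄t c₁ c₂ with hf₄
  have h2 : IsSolution V₁ V₂ (((1 + lam ^ 2 : ℝ) : ℂ)) f₂ :=
    sol_conj2 h1 (Complex.conj_ofReal _)
  have h4 : IsSolution V₁ V₂ (((1 + lam ^ 2 : ℝ) : ℂ)) f₄ :=
    sol_sub_smul (sol_sub_smul h4t h1 c₁) h2 c₂
  -- reflected solutions
  have hr1 : IsSolution V₁ V₂ (((1 + lam ^ 2 : ℝ) : ℂ)) (fun y => f₁ (-y)) :=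
    sol_reflect h1 hV1e hV2e
  have hr2 : IsSolution V₁ V₂ (((1 + lam ^ 2 : ℝ) : ℂ)) (fun y => f₂ (-y)) :=
    sol_reflect h2 hV1e hV2e
  have hr3 : IsSolution V₁ V₂ (((1 + lam ^ 2 : ℝ) : ℂ)) (fun y => f₃ (-y)) :=
    sol_reflect h3 hV1e hV2e
  have hr4 : IsSolution V₁ V₂ (((1 + lam ^ 2 : ℝ) : ℂ)) (fun y => f₄ (-y)) :=
    sol_reflect h4 hV1e hV2e
  -- scalar Wronskian values
  obtain ⟨w12, w13, w23, w34t⟩ := wr_vals hγ0 h1 h3 h4t hJost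
  have w12' : ∀ x, Wr f₁ f₂ x = 2 * Complex.I * (lam : ℂ) := w12
  have w23' : ∀ x, Wr f₂ f₃ x = 0 := w23
  have w34 : ∀ x, Wr f₃ f₄ x = -(2 * ((mu lam : ℝ) : ℂ)) := by
    intro x
    have s1 : Wr f₃ f₄ x
        = Wr f₃ (fun y => f₄t y - c₁ • f₁ y) x - c₂ * Wr f₃ f₂ x :=
      wr_sub_smul f₃ (fun y => f₄t y - c₁ • f₁ y) f₂
        (h4t.1.sub (h1.1.const_smul c₁)) (contDiff_conj2 h1.1) c₂ x
    have s2 : Wr f₃ (fun y => f₄t y - c₁ • f₁ y) x = Wr f₃ f₄t x - c₁ * Wr f₃ f₁ x :=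
      wr_sub_smul f₃ f₄t f₁ h4t.1 h1.1 c₁ x
    rw [s1, s2, w34t x, wr_antisymm f₃ f₁, w13 x, wr_antisymm f₃ f₂, w23' x]
    ring
  -- the matrices D and Dinv
  set D : Mat2 := !![2 * Complex.I * (lam : ℂ), 0; 0, -(2 * ((mu lam : ℝ) : ℂ))] with hD
  set Dinv : Mat2 :=
    !![(2 * Complex.I * (lam : ℂ))⁻¹, 0; 0, (-(2 * ((mu lam : ℝ) : ℂ)))⁻¹] with hDinv
  have hne1 : (2 * Complex.I * (lam : ℂ)) ≠ 0 := by
    apply mul_ne_zero (mul_ne_zero two_ne_zero Complex.I_ne_zero)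
    exact Complex.ofReal_ne_zero.2 hlam
  have hne2 : (-(2 * ((mu lam : ℝ) : ℂ))) ≠ 0 := by
    apply neg_ne_zero.2
    apply mul_ne_zero two_ne_zero
    exact Complex.ofReal_ne_zero.2 (ne_of_gt (mu_pos lam))
  have hDl : Dinv * D = 1 := by
    rw [hD, hDinv]
    exact diag_inv_mul hne1 hne2
  have hDpq : (2 * Complex.I * (lam : ℂ)) • pmat - (2 * ((mu lam : ℝ) : ℂ)) • qmat = D := by
    ext i j
    fin_cases i <;> fin_cases j <;>
      simp [hD, pmat, qmat, Matrix.smul_apply, Matrix.sub_apply]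
  -- matrix Wronskian values at the F level
  have WF12 : ∀ x, mWr (matOf f₁ f₃) (matOf f₂ f₄) x = D := by
    intro x
    rw [mWr_matOf, w12' x, hc1 x, wr_antisymm f₃ f₂, w23' x, w34 x]
    rw [hD]
    norm_num
  have WF21 : ∀ x, mWr (matOf f₂ f₄) (matOf f₁ f₃) x = -D := by
    intro x
    rw [mWr_matOf, wr_antisymm f₂ f₁, w12' x, w23' x,
      wr_antisymm f₄ f₁, hc1 x, wr_antisymm f₄ f₃, w34 x]
    ext i j
    fin_cases i <;> fin_cases j <;> simp [hD]
  have WF11 : ∀ x, mWr (matOf f₁ f₃) (matOf f₁ f₃) x = 0 := by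
    intro x
    rw [mWr_matOf, w13 x, wr_antisymm f₃ f₁, w13 x, wr_self f₁, wr_self f₃]
    ext i j
    fin_cases i <;> fin_cases j <;> simp
  have WF22 : ∀ x, mWr (matOf f₂ f₄) (matOf f₂ f₄) x = 0 := by
    intro x
    rw [mWr_matOf, hc2 x, wr_antisymm f₄ f₂, hc2 x, wr_self f₂, wr_self f₄]
    ext i j
    fin_cases i <;> fin_cases j <;> simp
  -- matrix Wronskian values at the G level
  have KG12 : ∀ x, mWr (fun s : ℝ => matOf f₂ f₄ (-s)) (fun s : ℝ => matOf f₁ f₃ (-s)) x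
      = D := by
    intro x; rw [mWr_reflect, WF21 (-x), neg_neg]
  have KG21 : ∀ x, mWr (fun s : ℝ => matOf f₁ f₃ (-s)) (fun s : ℝ => matOf f₂ f₄ (-s)) x
      = -D := by
    intro x; rw [mWr_reflect, WF12 (-x)]
  have KG11 : ∀ x, mWr (fun s : ℝ => matOf f₂ f₄ (-s)) (fun s : ℝ => matOf f₂ f₄ (-s)) x
      = 0 := by
    intro x; rw [mWr_reflect, WF22 (-x), neg_zero]
  have KG22 : ∀ x, mWr (fun s : ℝ => matOf f₁ f₃ (-s)) (fun s : ℝ => matOf f₁ f₃ (-s)) x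
      = 0 := by
    intro x; rw [mWr_reflect, WF11 (-x), neg_zero]
  -- abbreviations for the G functions
  set G1 : ℝ → Mat2 := fun s : ℝ => matOf f₂ f₄ (-s) with hG1
  set G2 : ℝ → Mat2 := fun s : ℝ => matOf f₁ f₃ (-s) with hG2
  -- entry differentiability
  have hG1d : ∀ i j, Differentiable ℝ fun y => G1 y i j := by
    rw [hG1, matOf_reflect]
    exact matOf_entry_diff hr2.1 hr4.1
  have hG2d : ∀ i j, Differentiable ℝ fun y => G2 y i j := by
    rw [hG2, matOf_reflect]
    exact matOf_entry_diff hr1.1 hr3.1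
  -- the key pointwise block relations
  have K1 : ∀ x, (mderiv G1 x)ᵀ * G2 x - (G1 x)ᵀ * mderiv G2 x = D := KG12
  have K2 : ∀ x, (mderiv G2 x)ᵀ * G1 x - (G2 x)ᵀ * mderiv G1 x = -D := KG21
  have K3 : ∀ x, (mderiv G1 x)ᵀ * G1 x - (G1 x)ᵀ * mderiv G1 x = 0 := KG11
  have K4 : ∀ x, (mderiv G2 x)ᵀ * G2 x - (G2 x)ᵀ * mderiv G2 x = 0 := KG22
  -- constancy of the Wronskians with F₁
  have CW1 : ∀ x, (mderiv G1 x)ᵀ * matOf f₁ f₃ x - (G1 x)ᵀ * mderiv (matOf f₁ f₃) x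
      = (mderiv G1 0)ᵀ * matOf f₁ f₃ 0 - (G1 0)ᵀ * mderiv (matOf f₁ f₃) 0 := by
    intro x
    have : mWr G1 (matOf f₁ f₃) x = mWr G1 (matOf f₁ f₃) 0 := by
      rw [hG1, matOf_reflect]
      exact mWr_matOf_const hr2 hr4 h1 h3 x 0
    exact this
  have CW2 : ∀ x, (mderiv G2 x)ᵀ * matOf f₁ f₃ x - (G2 x)ᵀ * mderiv (matOf f₁ f₃) x
      = (mderiv G2 0)ᵀ * matOf f₁ f₃ 0 - (G2 0)ᵀ * mderiv (matOf f₁ f₃) 0 := by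
    intro x
    have : mWr G2 (matOf f₁ f₃) x = mWr G2 (matOf f₁ f₃) 0 := by
      rw [hG2, matOf_reflect]
      exact mWr_matOf_const hr1 hr3 h1 h3 x 0
    exact this
  -- the candidate matrices
  set A : Mat2 :=
    -(Dinv * ((mderiv G2 0)ᵀ * matOf f₁ f₃ 0 - (G2 0)ᵀ * mderiv (matOf f₁ f₃) 0)) with hA
  set B : Mat2 :=
    Dinv * ((mderiv G1 0)ᵀ * matOf f₁ f₃ 0 - (G1 0)ᵀ * mderiv (matOf f₁ f₃) 0) with hB
  -- existence
  have hsat : ∀ x : ℝ, matOf f₁ f₃ x = G1 x * A + G2 x * B := by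
    intro x
    obtain ⟨hI, hZ⟩ := blocks_core (G1 x) (G2 x) (mderiv G1 x) (mderiv G2 x) D Dinv
      hDl (K1 x) (K2 x) (K3 x) (K4 x)
    have hZ' : G2 x * (Dinv * (G1 x)ᵀ) - G1 x * (Dinv * (G2 x)ᵀ) = 0 := by
      rw [← neg_sub, hZ, neg_zero]
    have expand : G1 x * A + G2 x * B
        = (G2 x * (Dinv * (mderiv G1 x)ᵀ) - G1 x * (Dinv * (mderiv G2 x)ᵀ)) * matOf f₁ f₃ x
          - (G2 x * (Dinv * (G1 x)ᵀ) - G1 x * (Dinv * (G2 x)ᵀ)) * mderiv (matOf f₁ f₃) x := by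
      rw [hA, hB, ← CW1 x, ← CW2 x]
      noncomm_ring
    rw [expand, hI, hZ', one_mul, Matrix.zero_mul, sub_zero]
  -- uniqueness of such a pair
  have huniq : ∀ A' B' : Mat2, (∀ x : ℝ, matOf f₁ f₃ x = G1 x * A' + G2 x * B') →
      A' = A ∧ B' = B := by
    intro A' B' h'
    have hall : ∀ x : ℝ, G1 x * (A' - A) + G2 x * (B' - B) = 0 := by
      intro x
      have e1 := (h' x).symm.trans (hsat x)
      calc G1 x * (A' - A) + G2 x * (B' - B)
          = (G1 x * A' + G2 x * B') - (G1 x * A + G2 x * B) := by noncomm_ring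
        _ = 0 := by rw [← e1]; exact sub_self _
    have funZ : (fun y => G1 y * (A' - A) + G2 y * (B' - B)) = fun _ : ℝ => (0 : Mat2) :=
      funext hall
    have hder : mderiv G1 0 * (A' - A) + mderiv G2 0 * (B' - B) = 0 := by
      rw [← mderiv_comb hG1d hG2d (A' - A) (B' - B) 0, funZ]
      exact mderiv_zero_fun 0
    have hval := hall 0
    have e2x : (G2 0)ᵀ * mderiv G1 0 - (mderiv G2 0)ᵀ * G1 0 = D := by
      rw [← neg_sub, K2 0, neg_neg]
    have e3x : (G1 0)ᵀ * mderiv G1 0 - (mderiv G1 0)ᵀ * G1 0 = 0 := by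
      rw [← neg_sub, K3 0, neg_zero]
    have e4x : (G2 0)ᵀ * mderiv G2 0 - (mderiv G2 0)ᵀ * G2 0 = 0 := by
      rw [← neg_sub, K4 0, neg_zero]
    have hDP : D * (A' - A) = 0 := by
      calc D * (A' - A)
          = ((G2 0)ᵀ * mderiv G1 0 - (mderiv G2 0)ᵀ * G1 0) * (A' - A)
            + ((G2 0)ᵀ * mderiv G2 0 - (mderiv G2 0)ᵀ * G2 0) * (B' - B) := by
            rw [e2x, e4x]; noncomm_ring
        _ = (G2 0)ᵀ * (mderiv G1 0 * (A' - A) + mderiv G2 0 * (B' - B))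
            - (mderiv G2 0)ᵀ * (G1 0 * (A' - A) + G2 0 * (B' - B)) := by noncomm_ring
        _ = 0 := by rw [hder, hval, Matrix.mul_zero, Matrix.mul_zero, sub_zero]
    have hDQ : D * (B' - B) = 0 := by
      have e1x : (G1 0)ᵀ * mderiv G2 0 - (mderiv G1 0)ᵀ * G2 0 = -D := by
        rw [← neg_sub, K1 0]
      have : (-D) * (B' - B) = 0 := by
        calc (-D) * (B' - B)
            = ((G1 0)ᵀ * mderiv G1 0 - (mderiv G1 0)ᵀ * G1 0) * (A' - A)
              + ((G1 0)ᵀ * mderiv G2 0 - (mderiv G1 0)ᵀ * G2 0) * (B' - B) := by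
              rw [e3x, e1x]; noncomm_ring
          _ = (G1 0)ᵀ * (mderiv G1 0 * (A' - A) + mderiv G2 0 * (B' - B))
              - (mderiv G1 0)ᵀ * (G1 0 * (A' - A) + G2 0 * (B' - B)) := by noncomm_ring
          _ = 0 := by rw [hder, hval, Matrix.mul_zero, Matrix.mul_zero, sub_zero]
      have := congrArg Neg.neg this
      simpa using this
    have hP : A' - A = 0 := by
      calc A' - A = (Dinv * D) * (A' - A) := by rw [hDl, Matrix.one_mul]
        _ = Dinv * (D * (A' - A)) := by rw [Matrix.mul_assoc]
        _ = 0 := by rw [hDP, Matrix.mul_zero]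
    have hQ : B' - B = 0 := by
      calc B' - B = (Dinv * D) * (B' - B) := by rw [hDl, Matrix.one_mul]
        _ = Dinv * (D * (B' - B)) := by rw [Matrix.mul_assoc]
        _ = 0 := by rw [hDQ, Matrix.mul_zero]
    exact ⟨sub_eq_zero.mp hP, sub_eq_zero.mp hQ⟩
  constructor
  · refine ⟨(A, B), hsat, ?_⟩
    rintro ⟨A', B'⟩ h'
    obtain ⟨hA', hB'⟩ := huniq A' B' h'
    simp [hA', hB']
  · intro A' B' hAB
    have hFeq : matOf f₁ f₃ = fun y => G1 y * A' + G2 y * B' := funext hAB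
    refine ⟨?_, ?_, ?_⟩
    · intro x
      have h := hAB (-x)
      rw [neg_neg] at h
      exact h
    · intro x
      have hmd : mderiv (matOf f₁ f₃) x = mderiv G1 x * A' + mderiv G2 x * B' := by
        conv_lhs => rw [hFeq]
        exact mderiv_comb hG1d hG2d A' B' x
      have : mWr (matOf f₁ f₃) G2 x
          = A'ᵀ * ((mderiv G1 x)ᵀ * G2 x - (G1 x)ᵀ * mderiv G2 x)
            + B'ᵀ * ((mderiv G2 x)ᵀ * G2 x - (G2 x)ᵀ * mderiv G2 x) := by
        show (mderiv (matOf f₁ f₃) x)ᵀ * G2 x - (matOf f₁ f₃ x)ᵀ * mderiv G2 x = _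
        rw [hmd, hAB x]
        simp only [Matrix.transpose_add, Matrix.transpose_mul]
        noncomm_ring
      rw [this, K1 x, K4 x, Matrix.mul_zero, add_zero, hDpq]
    · intro x
      have hmd : mderiv (matOf f₁ f₃) x = mderiv G1 x * A' + mderiv G2 x * B' := by
        conv_lhs => rw [hFeq]
        exact mderiv_comb hG1d hG2d A' B' x
      have : mWr (matOf f₁ f₃) G1 x
          = A'ᵀ * ((mderiv G1 x)ᵀ * G1 x - (G1 x)ᵀ * mderiv G1 x)
            + B'ᵀ * ((mderiv G2 x)ᵀ * G1 x - (G2 x)ᵀ * mderiv G1 x) := by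
        show (mderiv (matOf f₁ f₃) x)ᵀ * G1 x - (matOf f₁ f₃ x)ᵀ * mderiv G1 x = _
        rw [hmd, hAB x]
        simp only [Matrix.transpose_add, Matrix.transpose_mul]
        noncomm_ring
      rw [this, K3 x, K2 x, Matrix.mul_zero, zero_add, hDpq]
      noncomm_ring

end Pf

theorem stmt_9 (γ : ℝ) (V₁ V₂ : ℝ → ℝ) (hV : PotentialHyp γ V₁ V₂)
    (lam : ℝ) (hlam : lam ≠ 0) (f₁ f₃ f₄t : ℝ → ℂ × ℂ)
    (h1 : IsSolution V₁ V₂ (((1 + lam ^ 2 : ℝ) : ℂ)) f₁)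
    (h3 : IsSolution V₁ V₂ (((1 + lam ^ 2 : ℝ) : ℂ)) f₃)
    (h4t : IsSolution V₁ V₂ (((1 + lam ^ 2 : ℝ) : ℂ)) f₄t)
    (hJost : JostAsymp γ lam f₁ f₃ f₄t)
    (c₁ c₂ : ℂ)
    (hc1 : ∀ x : ℝ, Wr f₁ (f4def f₁ f₄t c₁ c₂) x = 0)
    (hc2 : ∀ x : ℝ, Wr (conj2 f₁) (f4def f₁ f₄t c₁ c₂) x = 0) :
    let f₄ := f4def f₁ f₄t c₁ c₂
    let F₁ := matOf f₁ f₃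
    let F₂ := matOf (conj2 f₁) f₄
    let G₁ : ℝ → Matrix (Fin 2) (Fin 2) ℂ := fun x => matOf (conj2 f₁) f₄ (-x)
    let G₂ : ℝ → Matrix (Fin 2) (Fin 2) ℂ := fun x => matOf f₁ f₃ (-x)
    (∃! AB : Matrix (Fin 2) (Fin 2) ℂ × Matrix (Fin 2) (Fin 2) ℂ,
      ∀ x : ℝ, F₁ x = G₁ x * AB.1 + G₂ x * AB.2) ∧
    (∀ A B : Matrix (Fin 2) (Fin 2) ℂ,
      (∀ x : ℝ, F₁ x = G₁ x * A + G₂ x * B) →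
      (∀ x : ℝ, G₂ x = F₂ x * A + F₁ x * B) ∧
      (∀ x : ℝ, mWr F₁ G₂ x
          = Aᵀ * ((2 * Complex.I * (lam : ℂ)) • pmat - (2 * ((mu lam : ℝ) : ℂ)) • qmat)) ∧
      (∀ x : ℝ, mWr F₁ G₁ x
          = -(Bᵀ * ((2 * Complex.I * (lam : ℂ)) • pmat - (2 * ((mu lam : ℝ) : ℂ)) • qmat)))) := by
  intro f₄ F₁ F₂ G₁ G₂
  exact Pf.main γ V₁ V₂ hV lam hlam f₁ f₃ f₄t h1 h3 h4t hJost c₁ c₂ hc1 hc2
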